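/- The polar dual of the 24-cell is the convex hull of G ∪ R ∪ B: (convexHull ℝ V)° = convexHull ℝ (G ∪ R ∪ B). -/

import Mathlib

/-! The polar of the hull of `V` is cut out by the inequalities `|yᵢ| + |yⱼ| ≤ 1` for `i ≠ j`,
which every point of `G ∪ R ∪ B` satisfies. Conversely, if all `|yᵢ| ≤ 1/2` then `y` lies in the
cube `[-1/2, 1/2]⁴`, the convex hull of its vertices `R ∪ B`. Otherwise a single coordinate has
`a = |yᵢ| > 1/2`, all others are at most `1 - a`, and `y = (2a - 1) • (±eᵢ) + (2 - 2a) • z` with `z`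
in that cube. -/

open scoped RealInnerProductSpace

/-- The `i`-th standard basis vector of `EuclideanSpace ℝ (Fin 4)`. -/
noncomputable def stdV (i : Fin 4) : EuclideanSpace ℝ (Fin 4) :=
  EuclideanSpace.single i (1 : ℝ)

/-- The 24 vertices of the 24-cell: all permutations of the coordinates of `(±1, ±1, 0, 0)`. -/
def cellV : Set (EuclideanSpace ℝ (Fin 4)) :=
  {x | ∃ i j : Fin 4, i ≠ j ∧ ∃ ε δ : ℝ, (ε = 1 ∨ ε = -1) ∧ (δ = 1 ∨ δ = -1) ∧
    x = ε • stdV i + δ • stdV j}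

/-- The 8 green vectors `±eᵢ`. -/
def colG : Set (EuclideanSpace ℝ (Fin 4)) :=
  {x | ∃ i : Fin 4, x = stdV i ∨ x = -stdV i}

/-- The 8 red vectors `(±1/2, ±1/2, ±1/2, ±1/2)` with an even number of minus signs. -/
def colR : Set (EuclideanSpace ℝ (Fin 4)) :=
  {x | ∃ ε : Fin 4 → ℝ, (∀ i, ε i = 1 ∨ ε i = -1) ∧ (∏ i, ε i) = 1 ∧ ∀ i, x i = ε i / 2}

/-- The 8 blue vectors `(±1/2, ±1/2, ±1/2, ±1/2)` with an odd number of minus signs. -/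
def colB : Set (EuclideanSpace ℝ (Fin 4)) :=
  {x | ∃ ε : Fin 4 → ℝ, (∀ i, ε i = 1 ∨ ε i = -1) ∧ (∏ i, ε i) = -1 ∧ ∀ i, x i = ε i / 2}

/-- The polar of a subset of `EuclideanSpace ℝ (Fin 4)`. -/
def polarSet (S : Set (EuclideanSpace ℝ (Fin 4))) : Set (EuclideanSpace ℝ (Fin 4)) :=
  {y | ∀ x ∈ S, ⟪x, y⟫ ≤ 1}

lemma convex_polarSet (S : Set (EuclideanSpace ℝ (Fin 4))) : Convex ℝ (polarSet S) := by
  have : polarSet S = ⋂ x ∈ S, {y | ⟪x, y⟫ ≤ 1} := by ext; simp [polarSet]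
  rw [this]
  exact convex_iInter₂ fun x _ ↦ convex_halfSpace_le (innerₛₗ ℝ x).isLinear 1

lemma polarSet_convexHull (S : Set (EuclideanSpace ℝ (Fin 4))) :
    polarSet (convexHull ℝ S) = polarSet S := by
  ext y
  have hconv : Convex ℝ {x : EuclideanSpace ℝ (Fin 4) | ⟪x, y⟫ ≤ 1} := by
    simp_rw [real_inner_comm y]
    exact convex_halfSpace_le (innerₛₗ ℝ y).isLinear 1
  exact hconv.convexHull_subset_iff

lemma inner_smul_stdV_add_smul_stdV (i j : Fin 4) (ε δ : ℝ) (y : EuclideanSpace ℝ (Fin 4)) :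
    ⟪ε • stdV i + δ • stdV j, y⟫ = ε * y i + δ * y j := by
  simp [stdV, inner_add_left, real_inner_smul_left, EuclideanSpace.inner_single_left]

lemma mul_le_abs_of_eq_one_or_eq_neg_one {ε : ℝ} (hε : ε = 1 ∨ ε = -1) (a : ℝ) :
    ε * a ≤ |a| := by
  rcases hε with rfl | rfl
  · simpa using le_abs_self a
  · simpa using neg_le_abs a

lemma mem_polarSet_cellV_iff (y : EuclideanSpace ℝ (Fin 4)) :
    y ∈ polarSet cellV ↔ ∀ i j, i ≠ j → |y i| + |y j| ≤ 1 := by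
  constructor
  · intro hy i j hij
    have h ε δ (hε : ε = 1 ∨ ε = -1) (hδ : δ = 1 ∨ δ = -1) : ε * y i + δ * y j ≤ 1 := by
      rw [← inner_smul_stdV_add_smul_stdV]
      exact hy _ ⟨i, j, hij, ε, δ, hε, hδ, rfl⟩
    have := h 1 1 (.inl rfl) (.inl rfl); have := h 1 (-1) (.inl rfl) (.inr rfl)
    have := h (-1) 1 (.inr rfl) (.inl rfl); have := h (-1) (-1) (.inr rfl) (.inr rfl)
    rcases abs_cases (y i) with ⟨hi, -⟩ | ⟨hi, -⟩ <;> rcases abs_cases (y j) with ⟨hj, -⟩ | ⟨hj, -⟩ <;>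
      rw [hi, hj] <;> linarith
  · rintro hy x ⟨i, j, hij, ε, δ, hε, hδ, rfl⟩
    rw [inner_smul_stdV_add_smul_stdV]
    linarith [hy i j hij, mul_le_abs_of_eq_one_or_eq_neg_one hε (y i),
      mul_le_abs_of_eq_one_or_eq_neg_one hδ (y j)]

lemma mem_colR_union_colB_iff (x : EuclideanSpace ℝ (Fin 4)) :
    x ∈ colR ∪ colB ↔ ∀ i, |x i| = 1 / 2 := by
  constructor
  · rintro (⟨ε, hε, -, hx⟩ | ⟨ε, hε, -, hx⟩) i <;> rcases hε i with h | h <;> simp [hx, h, abs_div]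
  · intro hx
    have hε i : 2 * x i = 1 ∨ 2 * x i = -1 := abs_eq zero_le_one |>.mp (by simp [abs_mul, hx])
    have hprod : |∏ i, 2 * x i| = 1 := by
      rw [Finset.abs_prod]
      exact Finset.prod_eq_one fun i _ ↦ by simp [abs_mul, hx]
    rcases abs_eq zero_le_one |>.mp hprod with h | h
    · exact Or.inl ⟨_, hε, h, fun i ↦ by ring⟩
    · exact Or.inr ⟨_, hε, h, fun i ↦ by ring⟩

lemma mem_convexHull_of_forall_abs_le {ι : Type*} [Fintype ι] {r : ℝ} {y : EuclideanSpace ℝ ι}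
    (hy : ∀ i, |y i| ≤ r) : y ∈ convexHull ℝ {x : EuclideanSpace ℝ ι | ∀ i, |x i| = r} := by
  have hpi : y.ofLp ∈ convexHull ℝ (Set.univ.pi fun _ : ι ↦ ({-r, r} : Set ℝ)) :=
    mem_convexHull_pi fun i _ ↦ by
      rw [convexHull_pair, segment_eq_Icc (by linarith [abs_nonneg (y i), hy i])]
      exact abs_le.mp (hy i)
  have hlin := (WithLp.linearEquiv 2 ℝ (ι → ℝ)).symm.toLinearMap.image_convexHull
    (Set.univ.pi fun _ : ι ↦ ({-r, r} : Set ℝ))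
  refine convexHull_mono ?_ (hlin ▸ Set.mem_image_of_mem _ hpi)
  rintro _ ⟨x, hx, rfl⟩ i
  have hr : 0 ≤ r := (abs_nonneg _).trans (hy i)
  obtain h | h : x i = -r ∨ x i = r := hx i trivial <;> simp [h, hr]

lemma exists_eq_smul_single_add_smul {ι : Type*} [Fintype ι] [DecidableEq ι]
    {y : EuclideanSpace ℝ ι} {i : ι} (hi : |y i| ∈ Set.Icc (1 / 2) 1)
    (hle : ∀ j ≠ i, |y j| ≤ 1 - |y i|) :
    ∃ z : EuclideanSpace ℝ ι, (∀ j, |z j| ≤ 1 / 2) ∧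
      y = (2 * |y i| - 1) • EuclideanSpace.single i (y i / |y i|) + (2 - 2 * |y i|) • z := by
  obtain ⟨hi₁, hi₂⟩ := hi
  have ha0 : 0 < |y i| := by linarith
  have hle' j (hj : j ≠ i) : |y j| ≤ (1 / 2) * (2 - 2 * |y i|) := by linarith [hle j hj]
  refine ⟨WithLp.toLp 2 fun j ↦ if j = i then y i / (2 * |y i|) else y j / (2 - 2 * |y i|),
    fun j ↦ ?_, ?_⟩
  · by_cases hj : j = i
    · subst hj
      rw [PiLp.toLp_apply, if_pos rfl, abs_div, abs_of_pos (by positivity : 0 < 2 * |y j|)]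
      exact le_of_eq (by field_simp)
    · simpa [hj, abs_div, abs_of_nonneg (by linarith : 0 ≤ 2 - 2 * |y i|)]
        using div_le_of_le_mul₀ (by linarith) (by norm_num) (hle' j hj)
  · ext j
    by_cases hj : j = i
    · subst hj
      simp only [PiLp.add_apply, PiLp.smul_apply, PiLp.single_eq_same, smul_eq_mul, if_pos]
      field_simp
      ring
    · have hyj : 2 - 2 * |y i| = 0 → y j = 0 := fun h ↦
        abs_nonpos_iff.mp (by simpa [h] using hle' j hj)
      simp [hj, mul_div_cancel_of_imp' hyj]

lemma mem_convexHull_of_abs_add_abs_le {y : EuclideanSpace ℝ (Fin 4)}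
    (hy : ∀ i j, i ≠ j → |y i| + |y j| ≤ 1) : y ∈ convexHull ℝ (colG ∪ colR ∪ colB) := by
  have hcube (x : EuclideanSpace ℝ (Fin 4)) (hx : ∀ i, |x i| ≤ 1 / 2) :
      x ∈ convexHull ℝ (colG ∪ colR ∪ colB) := by
    refine convexHull_mono (Set.union_subset_union_left colB Set.subset_union_right) ?_
    convert mem_convexHull_of_forall_abs_le hx
    ext; exact mem_colR_union_colB_iff _
  by_cases hsmall : ∀ i, |y i| ≤ 1 / 2
  · exact hcube y hsmall
  push Not at hsmall
  obtain ⟨i, hi⟩ := hsmall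
  have hi₁ : |y i| ≤ 1 := by
    obtain ⟨j, hji⟩ := exists_ne i
    linarith [hy i j hji.symm, abs_nonneg (y j)]
  obtain ⟨z, hz, hyz⟩ :=
    exists_eq_smul_single_add_smul ⟨hi.le, hi₁⟩ fun j hj ↦ by linarith [hy i j hj.symm]
  have hsign : y i / |y i| = 1 ∨ y i / |y i| = -1 :=
    abs_eq zero_le_one |>.mp (by rw [abs_div, abs_abs, div_self (by positivity)])
  have hvertex : EuclideanSpace.single i (y i / |y i|) ∈ colG := by
    rcases hsign with h | h
    · exact ⟨i, .inl (by rw [h]; rfl)⟩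
    · exact ⟨i, .inr (by rw [h]; exact PiLp.single_neg 2 i)⟩
  rw [hyz]
  exact convex_convexHull ℝ _ (subset_convexHull ℝ _ (.inl (.inl hvertex))) (hcube z hz)
    (by linarith) (by linarith) (by ring)

lemma colG_union_colR_union_colB_subset_polarSet_cellV :
    colG ∪ colR ∪ colB ⊆ polarSet cellV := by
  intro x hx
  rw [mem_polarSet_cellV_iff]
  intro i j hij
  rw [Set.union_assoc] at hx
  rcases hx with ⟨k, rfl | rfl⟩ | hx
  · by_cases i = k <;> by_cases j = k <;> simp_all [stdV]
  · by_cases i = k <;> by_cases j = k <;> simp_all [stdV]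
  · rw [(mem_colR_union_colB_iff x).mp hx i, (mem_colR_union_colB_iff x).mp hx j]
    norm_num

theorem cell24_polar :
    polarSet (convexHull ℝ cellV) = convexHull ℝ (colG ∪ colR ∪ colB) := by
  rw [polarSet_convexHull]
  refine Set.Subset.antisymm (fun y hy ↦ ?_) ?_
  · exact mem_convexHull_of_abs_add_abs_le ((mem_polarSet_cellV_iff y).mp hy)
  · exact convexHull_min colG_union_colR_union_colB_subset_polarSet_cellV (convex_polarSet cellV)
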